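/- For any finite subset S ⊆ Z, the two-sided ideal I_S of the Clifford algebra C = C(p,q,z) generated by {e_λ : λ ∈ S} is nilpotent; in fact I_S^{|S|+1} = 0. -/

import Mathlib

open Classical in
/-- The weight of generator `i`: `1` on `P`, `-1` on `M`, `0` elsewhere. -/
noncomputable def cliffordWeight {ι : Type} (P M : Set ι) (i : ι) : ℝ :=
  if i ∈ P then 1 else if i ∈ M then -1 else 0

/-- The diagonal bilinear form `B(x,y) = ∑ i, w i * x i * y i` on `ι →₀ ℝ`. -/
noncomputable def cliffordBilin {ι : Type} (P M : Set ι) :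
    (ι →₀ ℝ) →ₗ[ℝ] (ι →₀ ℝ) →ₗ[ℝ] ℝ :=
  Finsupp.lsum ℝ fun i =>
    LinearMap.toSpanSingleton ℝ ((ι →₀ ℝ) →ₗ[ℝ] ℝ) (cliffordWeight P M i • Finsupp.lapply i)

/-- The quadratic form of `C(p,q,z)`. -/
noncomputable def cliffordQ {ι : Type} (P M : Set ι) : QuadraticForm ℝ (ι →₀ ℝ) :=
  LinearMap.BilinMap.toQuadraticMap (cliffordBilin P M)

/-- The Clifford algebra `C(p,q,z)` (`Z` is the complement of `P ∪ M` in `ι`). -/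
noncomputable abbrev Cl {ι : Type} (P M : Set ι) := CliffordAlgebra (cliffordQ P M)

/-- The generator `e_i` of `C(p,q,z)`. -/
noncomputable def gen {ι : Type} (P M : Set ι) (i : ι) : Cl P M :=
  CliffordAlgebra.ι (cliffordQ P M) (Finsupp.single i 1)

/-- The product `e_I` over a finite ordered subset `I`. -/
noncomputable def prodGen {ι : Type} [LinearOrder ι] (P M : Set ι) (s : Finset ι) : Cl P M :=
  ((s.sort (· ≤ ·)).map (gen P M)).prod

/-- The subalgebra `C(p,q)` generated by the `e_λ`, `λ ∈ P ∪ M`. -/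
noncomputable def Cpq {ι : Type} (P M : Set ι) : Subalgebra ℝ (Cl P M) :=
  Algebra.adjoin ℝ (gen P M '' (P ∪ M))

/-- The ideal generated by the nilpotent generators `e_λ`, `λ ∈ Z`. -/
noncomputable def nilGenIdeal {ι : Type} (P M Z : Set ι) : TwoSidedIdeal (Cl P M) :=
  TwoSidedIdeal.span (gen P M '' Z)

/-- The nil radical of a ring: the supremum (sum) of all nil two-sided ideals. -/
def nilRad (A : Type*) [Ring A] : TwoSidedIdeal A :=
  sSup {I : TwoSidedIdeal A | ∀ x ∈ I, IsNilpotent x}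

/-- A two-sided ideal `I` is nilpotent: `Iⁿ = 0`, phrased via products of `n` elements. -/
def TwoSidedIdeal.IsNilpotentIdeal {A : Type*} [Ring A] (I : TwoSidedIdeal A) : Prop :=
  ∃ n : ℕ, 0 < n ∧ ∀ l : List A, l.length = n → (∀ x ∈ l, x ∈ I) → l.prod = 0

/-- A two-sided ideal is prime. -/
def TwoSidedIdeal.IsPrimeIdeal {A : Type*} [Ring A] (I : TwoSidedIdeal A) : Prop :=
  I ≠ ⊤ ∧ ∀ J K : TwoSidedIdeal A, (∀ a ∈ J, ∀ b ∈ K, a * b ∈ I) → J ≤ I ∨ K ≤ I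

/-!
For `λ ∈ Z` the vector `e_λ` is isotropic and orthogonal to everything, so `e_λ x = x̂ e_λ`
(with `x̂` the grade involution of `x`) and `e_λ² = 0`: the left ideal `C e_λ` is two-sided
and squares to zero. If `J^{n+1} = 0` and `K² = 0` for two-sided ideals `J`, `K`, then
`(J + K)^{n+2} = 0`, and induction on `S` gives `I_S^{|S|+1} = 0`.
-/

namespace Ideal

variable {A : Type*} [Ring A]

theorem list_prod_mem_pow {I : Ideal A} [I.IsTwoSided] {l : List A} (hl : ∀ x ∈ l, x ∈ I) :
    l.prod ∈ I ^ l.length := by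
  induction l with
  | nil => simp [Submodule.pow_zero]
  | cons x l ih =>
    rw [List.prod_cons, List.length_cons, IsTwoSided.pow_succ]
    exact mul_mem_mul (hl x List.mem_cons_self) (ih fun y hy => hl y (List.mem_cons_of_mem x hy))

theorem isTwoSided_span_singleton {g : A} (hg : ∀ x, ∃ y, g * x = y * g) :
    (span {g}).IsTwoSided where
  mul_mem_of_left b hx := by
    obtain ⟨c, rfl⟩ := mem_span_singleton'.mp hx
    obtain ⟨y, hy⟩ := hg b
    rw [mul_assoc, hy, ← mul_assoc]
    exact mem_span_singleton'.mpr ⟨c * y, rfl⟩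

instance isTwoSided_sup {I J : Ideal A} [I.IsTwoSided] [J.IsTwoSided] : (I ⊔ J).IsTwoSided where
  mul_mem_of_left b h := by
    obtain ⟨u, hu, v, hv, rfl⟩ := Submodule.mem_sup.mp h
    rw [add_mul]
    exact add_mem (mem_sup_left (mul_mem_right b _ hu)) (mem_sup_right (mul_mem_right b _ hv))

theorem span_singleton_mul_self_eq_bot {g : A} [(span {g}).IsTwoSided] (hg : g * g = 0) :
    span {g} * span {g} = ⊥ := by
  rw [span_singleton_mul_span_singleton, hg, span_singleton_eq_bot]

/-- In the expansion of `(J + K)^(m+1)`, words with two letters `K` vanish and words with one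
letter `K` lie in `J^m ⊓ K`. -/
theorem sup_pow_succ_le {J K : Ideal A} [J.IsTwoSided] [K.IsTwoSided] (hK : K * K = ⊥) (m : ℕ) :
    (J ⊔ K) ^ (m + 1) ≤ J ^ (m + 1) ⊔ (J ^ m ⊓ K) := by
  induction m with
  | zero => simp [Submodule.pow_one, Submodule.pow_zero]
  | succ m ih =>
    calc (J ⊔ K) ^ (m + 2) = (J ⊔ K) ^ (m + 1) * (J ⊔ K) := by rw [Submodule.pow_succ]
      _ ≤ (J ^ (m + 1) ⊔ (J ^ m ⊓ K)) * (J ⊔ K) := mul_mono_left ih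
      _ ≤ J ^ (m + 2) ⊔ (J ^ (m + 1) ⊓ K) := by
        rw [mul_sup, sup_mul, sup_mul]
        refine sup_le (sup_le ?_ ?_) (sup_le ?_ ?_)
        · exact le_sup_of_le_left (Submodule.pow_succ ..).ge
        · refine le_sup_of_le_right (le_inf ?_ ?_)
          · exact (mul_mono_left inf_le_left).trans (Submodule.pow_succ ..).ge
          · exact (mul_mono_left inf_le_right).trans mul_le_left
        · exact le_sup_of_le_right mul_le_inf
        · exact ((mul_mono_left inf_le_right).trans hK.le).trans bot_le

theorem sup_pow_eq_bot {J K : Ideal A} [J.IsTwoSided] [K.IsTwoSided] {n : ℕ}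
    (hJ : J ^ (n + 1) = ⊥) (hK : K * K = ⊥) : (J ⊔ K) ^ (n + 2) = ⊥ := by
  refine eq_bot_iff.mpr ((sup_pow_succ_le hK (n + 1)).trans (sup_le ?_ ?_))
  · exact hJ ▸ pow_le_pow_right (Nat.le_succ _)
  · exact hJ ▸ inf_le_left

end Ideal

namespace TwoSidedIdeal

variable {A : Type*} [Ring A]

theorem asIdeal_span_insert_le {g : A} {s : Set A} [(Ideal.span {g}).IsTwoSided] :
    (span (insert g s)).asIdeal ≤ (span s).asIdeal ⊔ Ideal.span {g} := by
  rw [← Ideal.asIdeal_toTwoSided ((span s).asIdeal ⊔ Ideal.span {g})]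
  refine asIdeal.monotone (span_le.mpr ?_)
  rintro x (rfl | hx) <;> rw [SetLike.mem_coe, Ideal.mem_toTwoSided]
  · exact Ideal.mem_sup_right (Ideal.mem_span_singleton_self x)
  · exact Ideal.mem_sup_left (mem_asIdeal.mpr (subset_span hx))

theorem asIdeal_span_pow_eq_bot (s : Finset A)
    (hs : ∀ g ∈ s, g * g = 0 ∧ ∀ x, ∃ y, g * x = y * g) :
    (span (s : Set A)).asIdeal ^ (s.card + 1) = ⊥ := by
  classical
  induction s using Finset.induction_on with
  | empty =>
    have : span (∅ : Set A) = ⊥ := eq_bot_iff.mpr (span_le.mpr (Set.empty_subset _))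
    rw [Finset.coe_empty, this, bot_asIdeal, Ideal.bot_pow (Nat.succ_ne_zero _)]
  | insert g s hgs ih =>
    obtain ⟨hgg, hg_normal⟩ := hs g (Finset.mem_insert_self g s)
    have := Ideal.isTwoSided_span_singleton hg_normal
    rw [Finset.card_insert_of_notMem hgs, Finset.coe_insert]
    refine eq_bot_iff.mpr ((Ideal.pow_right_mono asIdeal_span_insert_le _).trans ?_)
    exact (Ideal.sup_pow_eq_bot (ih fun h hh => hs h (Finset.mem_insert_of_mem hh))
      (Ideal.span_singleton_mul_self_eq_bot hgg)).le

end TwoSidedIdeal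

namespace CliffordAlgebra

variable {R M : Type*} [CommRing R] [AddCommGroup M] [Module R M] {Q : QuadraticForm R M}

theorem ι_mul_eq_involute_mul {v : M} (hv : ∀ w, Q.IsOrtho v w) (x : CliffordAlgebra Q) :
    ι Q v * x = involute x * ι Q v := by
  induction x using CliffordAlgebra.induction with
  | algebraMap r => rw [AlgHom.commutes]; exact (Algebra.commutes r _).symm
  | ι w => rw [involute_ι, neg_mul, ι_mul_ι_comm_of_isOrtho (hv w)]
  | mul x y hx hy => rw [map_mul, ← mul_assoc, hx, mul_assoc, hy, mul_assoc]
  | add x y hx hy => rw [map_add, mul_add, add_mul, hx, hy]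

end CliffordAlgebra

section Generators

variable {ι : Type} {P M : Set ι} {a : ι}

theorem cliffordWeight_eq_zero (hP : a ∉ P) (hM : a ∉ M) : cliffordWeight P M a = 0 := by
  simp [cliffordWeight, hP, hM]

theorem cliffordBilin_single (b : ι) (c : ℝ) (w : ι →₀ ℝ) :
    cliffordBilin P M (Finsupp.single b c) w = c * cliffordWeight P M b * w b := by
  simp only [cliffordBilin, Finsupp.coe_lsum, LinearMap.toSpanSingleton_apply, zero_smul,
    Finsupp.sum_single_index, LinearMap.smul_apply, Finsupp.lapply_apply, smul_eq_mul]
  ring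

theorem cliffordBilin_single_right (w : ι →₀ ℝ) :
    cliffordBilin P M w (Finsupp.single a 1) = w a * cliffordWeight P M a := by
  induction w using Finsupp.induction_linear with
  | zero => simp
  | add x y hx hy => rw [map_add, LinearMap.add_apply, hx, hy, Finsupp.add_apply, add_mul]
  | single b c =>
    rw [cliffordBilin_single]
    obtain rfl | hb := eq_or_ne b a
    · simp
    · simp [hb]

theorem cliffordQ_single : cliffordQ P M (Finsupp.single a 1) = cliffordWeight P M a := by
  rw [cliffordQ, LinearMap.BilinMap.toQuadraticMap_apply, cliffordBilin_single,
    Finsupp.single_eq_same, one_mul, mul_one]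

theorem gen_mul_self_eq_zero (h0 : cliffordWeight P M a = 0) : gen P M a * gen P M a = 0 := by
  rw [gen, CliffordAlgebra.ι_sq_scalar, cliffordQ_single, h0, map_zero]

theorem gen_mul_eq_involute_mul (h0 : cliffordWeight P M a = 0) (x : Cl P M) :
    gen P M a * x = CliffordAlgebra.involute x * gen P M a := by
  refine CliffordAlgebra.ι_mul_eq_involute_mul (fun w => ?_) x
  rw [← QuadraticMap.isOrtho_polarBilin, QuadraticMap.polarBilin_apply_apply, cliffordQ,
    LinearMap.BilinMap.polar_toQuadraticMap, cliffordBilin_single, cliffordBilin_single_right,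
    h0, mul_zero, zero_mul, mul_zero, add_zero]

end Generators

theorem span_finite_nilpotent_general {ι : Type} (P M Z : Set ι)
    (hPZ : Disjoint P Z) (hMZ : Disjoint M Z)
    (S : Finset ι) (hS : ↑S ⊆ Z) :
    (TwoSidedIdeal.span (gen P M '' ↑S)).IsNilpotentIdeal ∧
    ∀ l : List (Cl P M), l.length = S.card + 1 →
      (∀ x ∈ l, x ∈ TwoSidedIdeal.span (gen P M '' ↑S)) → l.prod = 0 := by
  classical
  have hgen : ∀ g ∈ S.image (gen P M), g * g = 0 ∧ ∀ x, ∃ y, g * x = y * g := by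
    rintro _ hg
    obtain ⟨a, ha, rfl⟩ := Finset.mem_image.mp hg
    have h0 := cliffordWeight_eq_zero (hPZ.notMem_of_mem_right (hS ha))
      (hMZ.notMem_of_mem_right (hS ha))
    exact ⟨gen_mul_self_eq_zero h0, fun x => ⟨_, gen_mul_eq_involute_mul h0 x⟩⟩
  have hpow : (TwoSidedIdeal.span (gen P M '' ↑S)).asIdeal ^ (S.card + 1) = ⊥ := by
    have h := TwoSidedIdeal.asIdeal_span_pow_eq_bot _ hgen
    rw [Finset.coe_image] at h
    exact eq_bot_iff.mpr (h ▸ Ideal.pow_le_pow_right (Nat.succ_le_succ Finset.card_image_le))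
  have hprod : ∀ l : List (Cl P M), l.length = S.card + 1 →
      (∀ x ∈ l, x ∈ TwoSidedIdeal.span (gen P M '' ↑S)) → l.prod = 0 := by
    intro l hl hmem
    have h := Ideal.list_prod_mem_pow (I := (TwoSidedIdeal.span (gen P M '' ↑S)).asIdeal) hmem
    rwa [hl, hpow, Ideal.mem_bot] at h
  exact ⟨⟨S.card + 1, S.card.succ_pos, hprod⟩, hprod⟩

/-- STATEMENT 12: for any finite `S ⊆ Z`, the two-sided ideal `I_S` generated by
`{e_λ : λ ∈ S}` is nilpotent; in fact `I_S^{|S|+1} = 0`. -/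
theorem span_finite_nilpotent {ι : Type} (P M Z : Set ι)
    (hPM : Disjoint P M) (hPZ : Disjoint P Z) (hMZ : Disjoint M Z)
    (hU : P ∪ M ∪ Z = Set.univ) (S : Finset ι) (hS : ↑S ⊆ Z) :
    (TwoSidedIdeal.span (gen P M '' ↑S)).IsNilpotentIdeal ∧
    ∀ l : List (Cl P M), l.length = S.card + 1 →
      (∀ x ∈ l, x ∈ TwoSidedIdeal.span (gen P M '' ↑S)) → l.prod = 0 :=
  span_finite_nilpotent_general P M Z hPZ hMZ S hS
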